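/- arXiv:2506.18300 — 3 statements merged into one kernel-verified Lean document; each statement's English description precedes it below -/
import Mathlib

section
/- Let G be a locally compact group with an invariant mean m on L^∞(G) that is bi-invariant, and let (π, V) be a finite-dimensional irreducible unitary representation of G. Then for all v₁, v₂, w₁, w₂ ∈ V, m(g ↦ ⟨π(g)v₁, v₂⟩·conj(⟨π(g)w₁, w₂⟩)) = (1/dim V)·⟨v₁, w₁⟩·conj(⟨v₂, w₂⟩). -/
/-!
Right invariance of `m` makes `(w₁, v₁) ↦ m (g ↦ ⟪v₂, π g v₁⟫ * conj ⟪w₂, π g w₁⟫)` a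
`π`-invariant sesquilinear form, so by Schur's lemma it is `c * ⟪w₁, v₁⟫` for a scalar
`c = c(v₂, w₂)`. Taking `v₁ = w₁ = eᵢ` along an orthonormal basis and summing, Parseval's
identity turns the integrand into the constant `⟪v₂, w₂⟫`, so `m 1 = 1` gives
`c * dim V = ⟪v₂, w₂⟫`.
-/

open scoped InnerProductSpace BoundedContinuousFunction

theorem Module.End.exists_forall_apply_eq_smul_of_commute {K V ι : Type*} [Field K]
    [IsAlgClosed K] [AddCommGroup V] [Module K V] [FiniteDimensional K V] (ρ : ι → Module.End K V)
    (hirr : ∀ U : Submodule K V, (∀ i, ∀ v ∈ U, ρ i v ∈ U) → U = ⊥ ∨ U = ⊤)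
    (T : Module.End K V) (hT : ∀ i, Commute T (ρ i)) : ∃ c : K, ∀ v, T v = c • v := by
  rcases subsingleton_or_nontrivial V with hV | hV
  · exact ⟨0, fun v => Subsingleton.elim _ _⟩
  obtain ⟨c, hc⟩ := T.exists_eigenvalue
  have hinv : ∀ i, ∀ v ∈ T.eigenspace c, ρ i v ∈ T.eigenspace c := by
    intro i v hv
    rw [Module.End.mem_eigenspace_iff] at hv ⊢
    rw [← Module.End.mul_apply, hT i, Module.End.mul_apply, hv, map_smul]
  rcases hirr _ hinv with hbot | htop
  · exact absurd hbot hc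
  · exact ⟨c, fun v => Module.End.mem_eigenspace_iff.mp (htop ▸ Submodule.mem_top)⟩

section InnerProductSpace

variable {V : Type*} [NormedAddCommGroup V] [InnerProductSpace ℂ V] [FiniteDimensional ℂ V]

theorem LinearMap.exists_inner_apply_eq (Φ : V →ₗ⋆[ℂ] V →ₗ[ℂ] ℂ) :
    ∃ T : V →ₗ[ℂ] V, ∀ w v, ⟪w, T v⟫_ℂ = Φ w v := by
  let b := stdOrthonormalBasis ℂ V
  refine ⟨∑ i, (Φ (b i)).smulRight (b i), fun w v => ?_⟩
  conv_rhs => rw [← b.sum_repr' w]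
  simp [mul_comm]

theorem exists_eq_mul_inner_of_invariant {ι : Type*} (ρ : ι → V ≃ₗᵢ[ℂ] V)
    (hirr : ∀ U : Submodule ℂ V, (∀ i, ∀ v ∈ U, ρ i v ∈ U) → U = ⊥ ∨ U = ⊤)
    (Φ : V →ₗ⋆[ℂ] V →ₗ[ℂ] ℂ) (hΦ : ∀ i w v, Φ (ρ i w) (ρ i v) = Φ w v) :
    ∃ c : ℂ, ∀ w v, Φ w v = c * ⟪w, v⟫_ℂ := by
  obtain ⟨T, hT⟩ := Φ.exists_inner_apply_eq
  have hcomm : ∀ i, Commute T ((ρ i).toLinearEquiv : V →ₗ[ℂ] V) := by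
    refine fun i => LinearMap.ext fun v => ext_inner_left ℂ fun w => ?_
    calc ⟪w, T (ρ i v)⟫_ℂ = Φ (ρ i ((ρ i).symm w)) (ρ i v) := by rw [hT, (ρ i).apply_symm_apply]
      _ = ⟪ρ i ((ρ i).symm w), ρ i (T v)⟫_ℂ := by rw [hΦ, ← hT, (ρ i).inner_map_map]
      _ = ⟪w, ρ i (T v)⟫_ℂ := by rw [(ρ i).apply_symm_apply]
  obtain ⟨c, hc⟩ := Module.End.exists_forall_apply_eq_smul_of_commute _ hirr T hcomm
  exact ⟨c, fun w v => by rw [← hT, hc, inner_smul_right]⟩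

end InnerProductSpace

section MatrixCoefficients

variable {G : Type*} [TopologicalSpace G]
variable {V : Type*} [NormedAddCommGroup V] [InnerProductSpace ℂ V]

noncomputable def matrixCoeff (ρ : G → V ≃ₗᵢ[ℂ] V)
    (hρ : ∀ v w : V, Continuous fun g => ⟪w, ρ g v⟫_ℂ) (v w : V) : G →ᵇ ℂ :=
  .ofNormedAddCommGroup (fun g => ⟪w, ρ g v⟫_ℂ) (hρ v w) (‖w‖ * ‖v‖) fun g => by
    simpa only [(ρ g).norm_map] using norm_inner_le_norm w (ρ g v)

@[simp]
theorem matrixCoeff_apply (ρ : G → V ≃ₗᵢ[ℂ] V)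
    (hρ : ∀ v w : V, Continuous fun g => ⟪w, ρ g v⟫_ℂ) (v w : V) (g : G) :
    matrixCoeff ρ hρ v w g = ⟪w, ρ g v⟫_ℂ :=
  rfl

noncomputable def meanCoeffForm (m : (G →ᵇ ℂ) →ₗ[ℂ] ℂ) (ρ : G → V ≃ₗᵢ[ℂ] V)
    (hρ : ∀ v w : V, Continuous fun g => ⟪w, ρ g v⟫_ℂ) (v₂ w₂ : V) :
    V →ₗ⋆[ℂ] V →ₗ[ℂ] ℂ :=
  .mk₂'ₛₗ _ _ (fun w₁ v₁ => m (matrixCoeff ρ hρ v₁ v₂ * star (matrixCoeff ρ hρ w₁ w₂)))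
    (fun w w' v => by
      rw [← map_add]; congr 1; ext g; simp [mul_add])
    (fun c w v => by
      rw [← map_smul]; congr 1; ext g; simp [mul_left_comm])
    (fun w v v' => by
      rw [← map_add]; congr 1; ext g; simp [add_mul])
    (fun c w v => by
      rw [← map_smul]; congr 1; ext g; simp [mul_assoc])

theorem meanCoeffForm_apply (m : (G →ᵇ ℂ) →ₗ[ℂ] ℂ) (ρ : G → V ≃ₗᵢ[ℂ] V)
    (hρ : ∀ v w : V, Continuous fun g => ⟪w, ρ g v⟫_ℂ) (v₁ v₂ w₁ w₂ : V) :
    meanCoeffForm m ρ hρ v₂ w₂ w₁ v₁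
      = m (matrixCoeff ρ hρ v₁ v₂ * star (matrixCoeff ρ hρ w₁ w₂)) :=
  rfl

theorem meanCoeffForm_map_map [Group G] (m : (G →ᵇ ℂ) →ₗ[ℂ] ℂ)
    (hm_right : ∀ (f f' : G →ᵇ ℂ) (h : G), (∀ g, f' g = f (g * h)) → m f' = m f)
    (π : G →* (V ≃ₗᵢ[ℂ] V)) (hπ : ∀ v w : V, Continuous fun g => ⟪w, π g v⟫_ℂ)
    (v₂ w₂ : V) (h : G) (w₁ v₁ : V) :
    meanCoeffForm m π hπ v₂ w₂ (π h w₁) (π h v₁) = meanCoeffForm m π hπ v₂ w₂ w₁ v₁ :=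
  hm_right _ _ h fun g => by simp

theorem sum_meanCoeffForm_self (m : (G →ᵇ ℂ) →ₗ[ℂ] ℂ) (hm_one : m 1 = 1)
    (ρ : G → V ≃ₗᵢ[ℂ] V) (hρ : ∀ v w : V, Continuous fun g => ⟪w, ρ g v⟫_ℂ)
    {ι : Type*} [Fintype ι] (b : OrthonormalBasis ι ℂ V) (v₂ w₂ : V) :
    ∑ i, meanCoeffForm m ρ hρ v₂ w₂ (b i) (b i) = ⟪v₂, w₂⟫_ℂ := by
  have hsum : ∑ i, matrixCoeff ρ hρ (b i) v₂ * star (matrixCoeff ρ hρ (b i) w₂)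
      = ⟪v₂, w₂⟫_ℂ • (1 : G →ᵇ ℂ) := by
    ext g
    simpa [Complex.star_def] using (b.map (ρ g)).sum_inner_mul_inner v₂ w₂
  simp only [meanCoeffForm_apply, ← map_sum, hsum, map_smul, hm_one, smul_eq_mul, mul_one]

end MatrixCoefficients

theorem mean_matrix_coeff_of_finite_dim_irreducible_general
    {G : Type*} [Group G] [TopologicalSpace G]
    (m : (G →ᵇ ℂ) →ₗ[ℂ] ℂ)
    (hm_one : m 1 = 1)
    (hm_right : ∀ (f f' : G →ᵇ ℂ) (h : G), (∀ g, f' g = f (g * h)) → m f' = m f)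
    {V : Type*} [NormedAddCommGroup V] [InnerProductSpace ℂ V] [FiniteDimensional ℂ V]
    (π : G →* (V ≃ₗᵢ[ℂ] V))
    (hcont : ∀ v w : V, Continuous fun g => (⟪w, (π g) v⟫_ℂ))
    (hirr : ∀ U : Submodule ℂ V, (∀ g, ∀ v ∈ U, (π g) v ∈ U) → U = ⊥ ∨ U = ⊤) :
    ∀ (v₁ v₂ w₁ w₂ : V) (f : G →ᵇ ℂ),
      (∀ g, f g = ⟪v₂, (π g) v₁⟫_ℂ * (starRingEnd ℂ) ⟪w₂, (π g) w₁⟫_ℂ) →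
      m f = (1 / (Module.finrank ℂ V : ℂ)) * ⟪w₁, v₁⟫_ℂ
        * (starRingEnd ℂ) ⟪w₂, v₂⟫_ℂ := by
  intro v₁ v₂ w₁ w₂ f hf
  obtain ⟨c, hc⟩ := exists_eq_mul_inner_of_invariant π hirr (meanCoeffForm m π hcont v₂ w₂)
    (meanCoeffForm_map_map m hm_right π hcont v₂ w₂)
  have hmf : m f = c * ⟪w₁, v₁⟫_ℂ := by
    rw [← hc, meanCoeffForm_apply]
    congr 1; ext g; simp [hf]
  have htrace : c * Module.finrank ℂ V = ⟪v₂, w₂⟫_ℂ := by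
    let b := stdOrthonormalBasis ℂ V
    simpa [hc, b.inner_eq_one, mul_comm] using sum_meanCoeffForm_self m hm_one π hcont b v₂ w₂
  rw [hmf, inner_conj_symm, ← htrace]
  rcases eq_or_ne (Module.finrank ℂ V) 0 with hd | hd
  · have : Subsingleton V := Module.finrank_zero_iff.mp hd
    simp [Subsingleton.elim w₁ 0]
  · field_simp

/-- Asymptotic Schur orthogonality via a bi-invariant mean: if `m` is a bi-invariant
mean on `L^∞(G)` (modelled on bounded continuous functions) and `π` is a
finite-dimensional irreducible unitary representation, then the mean of
`g ↦ ⟨π(g)v₁, v₂⟩ ⬝ conj ⟨π(g)w₁, w₂⟩` equals `(1/dim V) ⟨v₁, w₁⟩ conj ⟨v₂, w₂⟩`.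
Here `⟨x, y⟩` denotes the inner product linear in the first variable, i.e. `⟪y, x⟫_ℂ`
in Mathlib's convention. -/
theorem mean_matrix_coeff_of_finite_dim_irreducible
    {G : Type*} [Group G] [TopologicalSpace G] [IsTopologicalGroup G]
    [LocallyCompactSpace G]
    (m : (G →ᵇ ℂ) →ₗ[ℂ] ℂ)
    (hm_one : m 1 = 1)
    (hm_pos : ∀ f : G →ᵇ ℂ, (∀ g, 0 ≤ (f g).re ∧ (f g).im = 0) →
      0 ≤ (m f).re ∧ (m f).im = 0)
    (hm_left : ∀ (f f' : G →ᵇ ℂ) (h : G), (∀ g, f' g = f (h * g)) → m f' = m f)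
    (hm_right : ∀ (f f' : G →ᵇ ℂ) (h : G), (∀ g, f' g = f (g * h)) → m f' = m f)
    {V : Type*} [NormedAddCommGroup V] [InnerProductSpace ℂ V] [FiniteDimensional ℂ V]
    (π : G →* (V ≃ₗᵢ[ℂ] V))
    (hcont : ∀ v w : V, Continuous fun g => (⟪w, (π g) v⟫_ℂ))
    (hirr : ∀ U : Submodule ℂ V, (∀ g, ∀ v ∈ U, (π g) v ∈ U) → U = ⊥ ∨ U = ⊤) :
    ∀ (v₁ v₂ w₁ w₂ : V) (f : G →ᵇ ℂ),
      (∀ g, f g = ⟪v₂, (π g) v₁⟫_ℂ * (starRingEnd ℂ) ⟪w₂, (π g) w₁⟫_ℂ) →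
      m f = (1 / (Module.finrank ℂ V : ℂ)) * ⟪w₁, v₁⟫_ℂ
        * (starRingEnd ℂ) ⟪w₂, v₂⟫_ℂ :=
  mean_matrix_coeff_of_finite_dim_irreducible_general m hm_one hm_right π hcont hirr
end

section
/- Let G be a locally compact group with a bi-invariant mean m, and let (π, V) be an infinite-dimensional irreducible unitary representation of G. Then for the constant c_π characterized by m(|⟨π(g)v₁, v₂⟩|²) = c_π·‖v₁‖²·‖v₂‖², one has c_π = 0. -/
/-!
For a unit vector `v` and an orthonormal family `e₁, …, eₖ`, Bessel's inequality gives
`∑ᵢ |⟨π(g)v, eᵢ⟩|² ≤ 1` pointwise, so positivity of `m` and `m 1 = 1` yield `k c ≤ 1`.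
In infinite dimension such families exist for every `k` (Gram–Schmidt), forcing `c = 0`.
-/

open scoped InnerProductSpace BoundedContinuousFunction ComplexOrder

theorem exists_orthonormal_fin_of_not_finiteDimensional {𝕜 E : Type*} [RCLike 𝕜]
    [NormedAddCommGroup E] [InnerProductSpace 𝕜 E] (h : ¬ FiniteDimensional 𝕜 E) (n : ℕ) :
    ∃ e : Fin n → E, Orthonormal 𝕜 e := by
  have hrank : (n : Cardinal) ≤ Module.rank 𝕜 E :=
    Cardinal.natCast_lt_aleph0.le.trans (not_lt.mp (Module.rank_lt_aleph0_iff.not.mpr h))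
  obtain ⟨f, hf⟩ := exists_linearIndependent_of_le_rank hrank
  exact ⟨_, InnerProductSpace.gramSchmidtNormed_orthonormal hf⟩

theorem Complex.eq_zero_of_nonneg_of_forall_natCast_mul_le_one {c : ℂ} (h0 : 0 ≤ c)
    (h : ∀ k : ℕ, (k : ℂ) * c ≤ 1) : c = 0 := by
  obtain ⟨x, hx, rfl⟩ := RCLike.nonneg_iff_exists_ofReal.mp h0
  have hk (k : ℕ) : (k : ℝ) * x ≤ 1 := by simpa using Complex.real_le_real.mp (by simpa using h k)
  obtain hx | rfl := hx.lt_or_eq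
  · obtain ⟨k, hk'⟩ := exists_nat_gt x⁻¹
    have := hk k
    rw [inv_lt_iff_one_lt_mul₀ hx] at hk'
    linarith
  · simp

section PositiveFunctional

variable {X : Type*} [TopologicalSpace X] {m : (X →ᵇ ℂ) →ₗ[ℂ] ℂ}

theorem map_le_map_of_forall_le (hm : ∀ f : X →ᵇ ℂ, (∀ x, 0 ≤ f x) → 0 ≤ m f)
    {f f' : X →ᵇ ℂ} (h : ∀ x, f x ≤ f' x) : m f ≤ m f' := by
  simpa [sub_nonneg] using hm (f' - f) fun x ↦ by simpa [sub_nonneg] using h x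

end PositiveFunctional

section MatrixCoefficient

variable {G V : Type*} [Monoid G] [TopologicalSpace G] [NormedAddCommGroup V]
  [InnerProductSpace ℂ V]

noncomputable def matrixCoeffNormSq (π : G →* (V ≃ₗᵢ[ℂ] V)) (v w : V)
    (hcont : Continuous fun g ↦ ⟪w, π g v⟫_ℂ) : G →ᵇ ℂ :=
  .ofNormedAddCommGroup (fun g ↦ ((‖⟪w, π g v⟫_ℂ‖ ^ 2 : ℝ) : ℂ)) (by fun_prop)
    ((‖w‖ * ‖v‖) ^ 2) fun g ↦ by
      rw [Complex.norm_real, Real.norm_eq_abs, abs_of_nonneg (by positivity)]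
      gcongr
      simpa using norm_inner_le_norm w (π g v)

@[simp]
theorem matrixCoeffNormSq_apply (π : G →* (V ≃ₗᵢ[ℂ] V)) (v w : V)
    (hcont : Continuous fun g ↦ ⟪w, π g v⟫_ℂ) (g : G) :
    matrixCoeffNormSq π v w hcont g = ((‖⟪w, π g v⟫_ℂ‖ ^ 2 : ℝ) : ℂ) :=
  rfl

theorem sum_matrixCoeffNormSq_le {ι : Type*} [Fintype ι] (π : G →* (V ≃ₗᵢ[ℂ] V)) (v : V)
    {e : ι → V} (he : Orthonormal ℂ e) (hcont : ∀ i, Continuous fun g ↦ ⟪e i, π g v⟫_ℂ) (g : G) :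
    ∑ i, matrixCoeffNormSq π v (e i) (hcont i) g ≤ ((‖v‖ ^ 2 : ℝ) : ℂ) := by
  have := he.sum_inner_products_le (π g v) (s := Finset.univ)
  rw [(π g).norm_map] at this
  simp only [matrixCoeffNormSq_apply]
  exact_mod_cast this

end MatrixCoefficient

theorem mean_constant_zero_of_infinite_dim_general
    {G : Type*} [Group G] [TopologicalSpace G]
    (m : (G →ᵇ ℂ) →ₗ[ℂ] ℂ)
    (hm_one : m 1 = 1)
    (hm_pos : ∀ f : G →ᵇ ℂ, (∀ g, 0 ≤ (f g).re ∧ (f g).im = 0) →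
      0 ≤ (m f).re ∧ (m f).im = 0)
    {V : Type*} [NormedAddCommGroup V] [InnerProductSpace ℂ V]
    (hinf : ¬ FiniteDimensional ℂ V)
    (π : G →* (V ≃ₗᵢ[ℂ] V))
    (hcont : ∀ v w : V, Continuous fun g => (⟪w, (π g) v⟫_ℂ))
    (c : ℂ)
    (hc : ∀ (v₁ v₂ : V) (f : G →ᵇ ℂ),
      (∀ g, f g = (‖(⟪v₂, (π g) v₁⟫_ℂ)‖ ^ 2 : ℝ)) →
      m f = c * (‖v₁‖ ^ 2 : ℝ) * (‖v₂‖ ^ 2 : ℝ)) :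
    c = 0 := by
  have hmono {f f' : G →ᵇ ℂ} (h : ∀ g, f g ≤ f' g) : m f ≤ m f' :=
    map_le_map_of_forall_le (fun f hf ↦ RCLike.nonneg_iff.mpr <|
      hm_pos f fun g ↦ RCLike.nonneg_iff.mp (hf g)) h
  have hmF (v w : V) : m (matrixCoeffNormSq π v w (hcont v w)) = c * ‖v‖ ^ 2 * ‖w‖ ^ 2 := by
    simpa using hc v w _ fun g ↦ rfl
  obtain ⟨v, hv⟩ := exists_orthonormal_fin_of_not_finiteDimensional hinf 1
  have hc_nonneg : 0 ≤ c := by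
    simpa [hmF, hv.1 0] using
      hmono (f := 0) (f' := matrixCoeffNormSq π (v 0) (v 0) (hcont _ _))
      fun g ↦ by simp [Complex.zero_le_real]
  refine Complex.eq_zero_of_nonneg_of_forall_natCast_mul_le_one hc_nonneg fun k ↦ ?_
  obtain ⟨e, he⟩ := exists_orthonormal_fin_of_not_finiteDimensional hinf k
  simpa [map_sum, hmF, hv.1 0, he.1, hm_one] using
    hmono (f := ∑ i, matrixCoeffNormSq π (v 0) (e i) (hcont _ _)) (f' := 1)
      fun g ↦ by simpa [hv.1 0] using sum_matrixCoeffNormSq_le π (v 0) he (fun i ↦ hcont _ _) g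

/-- For an infinite-dimensional irreducible unitary representation `π` of a locally
compact group `G` with a bi-invariant mean `m`, the constant `c_π` with
`m(|⟨π(g)v₁, v₂⟩|²) = c_π ‖v₁‖² ‖v₂‖²` must vanish. -/
theorem mean_constant_zero_of_infinite_dim
    {G : Type*} [Group G] [TopologicalSpace G] [IsTopologicalGroup G]
    [LocallyCompactSpace G]
    (m : (G →ᵇ ℂ) →ₗ[ℂ] ℂ)
    (hm_one : m 1 = 1)
    (hm_pos : ∀ f : G →ᵇ ℂ, (∀ g, 0 ≤ (f g).re ∧ (f g).im = 0) →
      0 ≤ (m f).re ∧ (m f).im = 0)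
    (hm_left : ∀ (f f' : G →ᵇ ℂ) (h : G), (∀ g, f' g = f (h * g)) → m f' = m f)
    (hm_right : ∀ (f f' : G →ᵇ ℂ) (h : G), (∀ g, f' g = f (g * h)) → m f' = m f)
    {V : Type*} [NormedAddCommGroup V] [InnerProductSpace ℂ V] [CompleteSpace V]
    (hinf : ¬ FiniteDimensional ℂ V)
    (π : G →* (V ≃ₗᵢ[ℂ] V))
    (hcont : ∀ v w : V, Continuous fun g => (⟪w, (π g) v⟫_ℂ))
    (hirr : ∀ U : Submodule ℂ V, IsClosed (U : Set V) →
      (∀ g, ∀ v ∈ U, (π g) v ∈ U) → U = ⊥ ∨ U = ⊤)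
    (c : ℂ)
    (hc : ∀ (v₁ v₂ : V) (f : G →ᵇ ℂ),
      (∀ g, f g = (‖(⟪v₂, (π g) v₁⟫_ℂ)‖ ^ 2 : ℝ)) →
      m f = c * (‖v₁‖ ^ 2 : ℝ) * (‖v₂‖ ^ 2 : ℝ)) :
    c = 0 :=
  mean_constant_zero_of_infinite_dim_general m hm_one hm_pos hinf π hcont c hc
end

section
/- Let K be a non-archimedean local field, and in the Heisenberg group H_n(K) let F_m = B(r_m) × B(r_m) × B(r_m²) where B(r) is the closed ball of radius r about 0 (sup norm on K^n) and r_m → ∞. Then for every compact set C ⊂ H_n(K) there exists M such that for all m ≥ M and all g₁, g₂ ∈ C, g₂⁻¹·F_m·g₁ = F_m. -/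
open Matrix Filter

/-- Multiplication of the Heisenberg group `H_n(K) = K^n × K^n × K`. -/
def heisMul {K : Type*} [Field K] {n : ℕ}
    (g h : (Fin n → K) × (Fin n → K) × K) : (Fin n → K) × (Fin n → K) × K :=
  (g.1 + h.1, g.2.1 + h.2.1, g.2.2 + h.2.2 + g.1 ⬝ᵥ h.2.1)

/-- Inversion in the Heisenberg group. -/
def heisInv {K : Type*} [Field K] {n : ℕ}
    (g : (Fin n → K) × (Fin n → K) × K) : (Fin n → K) × (Fin n → K) × K :=
  (-g.1, -g.2.1, -g.2.2 + g.1 ⬝ᵥ g.2.1)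

/-!
Over an ultrametric field the box `B(R) × B(R) × B(R²)` is a subgroup of `H_n(K)`: the
ultrametric inequality bounds each coordinate of a product by the maximum of the terms, and
the only cross term `x ⬝ᵥ y'` has norm at most `R · R`. A compact set lies in every such box
with `R` large enough, so once `r_m` is that large the elements of `C` lie in the subgroup
`F_m`, and two-sided translation by them preserves `F_m`.
-/

section Heisenberg

variable {K : Type*} {n : ℕ}

lemma heisMul_heisMul_heisInv_heisMul [Field K]
    (g₁ g₂ p : (Fin n → K) × (Fin n → K) × K) :
    heisMul (heisMul (heisInv g₂) (heisMul (heisMul g₂ p) (heisInv g₁))) g₁ = p := by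
  simp only [heisMul, heisInv, Prod.ext_iff]
  refine ⟨by abel, by abel, ?_⟩
  simp only [add_dotProduct, dotProduct_add, neg_dotProduct, dotProduct_neg]
  ring

def heisBall [NormedField K] (R : ℝ) : Set ((Fin n → K) × (Fin n → K) × K) :=
  {p | ‖p.1‖ ≤ R ∧ ‖p.2.1‖ ≤ R ∧ ‖p.2.2‖ ≤ R ^ 2}

lemma norm_dotProduct_le [NormedField K] [IsUltrametricDist K] {ι : Type*} [Fintype ι]
    (x y : ι → K) : ‖x ⬝ᵥ y‖ ≤ ‖x‖ * ‖y‖ :=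
  IsUltrametricDist.norm_sum_le_of_forall_le_of_nonneg (by positivity) fun i _ => by
    rw [norm_mul]
    exact mul_le_mul (norm_le_pi_norm x i) (norm_le_pi_norm y i) (norm_nonneg _)
      (norm_nonneg _)

variable [NormedField K] [IsUltrametricDist K] {R : ℝ}

lemma norm_dotProduct_le_sq {x y : Fin n → K} (hx : ‖x‖ ≤ R) (hy : ‖y‖ ≤ R) :
    ‖x ⬝ᵥ y‖ ≤ R ^ 2 :=
  (norm_dotProduct_le x y).trans <| by
    rw [sq]; exact mul_le_mul hx hy (norm_nonneg _) ((norm_nonneg _).trans hx)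

lemma heisMul_mem_heisBall {g h : (Fin n → K) × (Fin n → K) × K}
    (hg : g ∈ heisBall R) (hh : h ∈ heisBall R) : heisMul g h ∈ heisBall R := by
  obtain ⟨hg₁, hg₂, hg₃⟩ := hg
  obtain ⟨hh₁, hh₂, hh₃⟩ := hh
  refine ⟨(IsUltrametricDist.norm_add_le_max _ _).trans (max_le hg₁ hh₁),
    (IsUltrametricDist.norm_add_le_max _ _).trans (max_le hg₂ hh₂), ?_⟩
  exact (IsUltrametricDist.norm_add_le_max _ _).trans (max_le
    ((IsUltrametricDist.norm_add_le_max _ _).trans (max_le hg₃ hh₃))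
    (norm_dotProduct_le_sq hg₁ hh₂))

lemma heisInv_mem_heisBall {g : (Fin n → K) × (Fin n → K) × K} (hg : g ∈ heisBall R) :
    heisInv g ∈ heisBall R := by
  obtain ⟨hg₁, hg₂, hg₃⟩ := hg
  refine ⟨(norm_neg g.1).trans_le hg₁, (norm_neg g.2.1).trans_le hg₂, ?_⟩
  exact (IsUltrametricDist.norm_add_le_max _ _).trans
    (max_le ((norm_neg _).trans_le hg₃) (norm_dotProduct_le_sq hg₁ hg₂))

lemma image_two_sided_translate_heisBall {g₁ g₂ : (Fin n → K) × (Fin n → K) × K}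
    (hg₁ : g₁ ∈ heisBall R) (hg₂ : g₂ ∈ heisBall R) :
    (fun p => heisMul (heisMul (heisInv g₂) p) g₁) '' heisBall R = heisBall R := by
  refine subset_antisymm ?_ fun p hp => ⟨heisMul (heisMul g₂ p) (heisInv g₁), ?_,
    heisMul_heisMul_heisInv_heisMul g₁ g₂ p⟩
  · rintro _ ⟨p, hp, rfl⟩
    exact heisMul_mem_heisBall (heisMul_mem_heisBall (heisInv_mem_heisBall hg₂) hp) hg₁
  · exact heisMul_mem_heisBall (heisMul_mem_heisBall hg₂ hp) (heisInv_mem_heisBall hg₁)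

end Heisenberg

lemma Bornology.IsBounded.exists_forall_le_subset_heisBall {K : Type*} [NormedField K] {n : ℕ}
    {C : Set ((Fin n → K) × (Fin n → K) × K)} (hC : Bornology.IsBounded C) :
    ∃ k : ℝ, ∀ R, k ≤ R → C ⊆ heisBall R := by
  obtain ⟨k₀, hk₀⟩ := hC.exists_norm_le
  refine ⟨max k₀ 1, fun R hR g hg => ?_⟩
  have hg : ‖g‖ ≤ R := (hk₀ g hg).trans ((le_max_left _ _).trans hR)
  have hR_le_sq : R ≤ R ^ 2 := by nlinarith [(le_max_right k₀ 1).trans hR]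
  exact ⟨(norm_fst_le g).trans hg, ((norm_fst_le g.2).trans (norm_snd_le g)).trans hg,
    ((norm_snd_le g.2).trans (norm_snd_le g)).trans (hg.trans hR_le_sq)⟩

theorem nonarch_folner_eventually_equal_general
    {K : Type*} [NontriviallyNormedField K]
    (hna : IsNonarchimedean (norm : K → ℝ)) {n : ℕ}
    (r : ℕ → ℝ) (hr : Tendsto r atTop atTop)
    (F : ℕ → Set ((Fin n → K) × (Fin n → K) × K))
    (hF : ∀ m, F m = {p | ‖p.1‖ ≤ r m ∧ ‖p.2.1‖ ≤ r m ∧ ‖p.2.2‖ ≤ (r m) ^ 2})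
    (C : Set ((Fin n → K) × (Fin n → K) × K)) (hC : IsCompact C) :
    ∃ M : ℕ, ∀ m ≥ M, ∀ g₁ ∈ C, ∀ g₂ ∈ C,
      (fun p => heisMul (heisMul (heisInv g₂) p) g₁) '' F m = F m := by
  have := IsUltrametricDist.isUltrametricDist_of_isNonarchimedean_norm hna
  obtain ⟨k, hk⟩ := hC.isBounded.exists_forall_le_subset_heisBall
  obtain ⟨M, hM⟩ := (hr.eventually_ge_atTop k).exists_forall_of_atTop
  refine ⟨M, fun m hm g₁ hg₁ g₂ hg₂ => ?_⟩
  have hC_sub : C ⊆ heisBall (r m) := hk (r m) (hM m hm)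
  rw [hF m]
  exact image_two_sided_translate_heisBall (hC_sub hg₁) (hC_sub hg₂)

/-- Over a nonarchimedean local field, for the Følner sets
`F_m = B(r_m) × B(r_m) × B(r_m²)` (sup-norm balls) with `r_m → ∞`, and any compact
`C ⊆ H_n(K)`, eventually `g₂⁻¹ F_m g₁ = F_m` for all `g₁, g₂ ∈ C`. -/
theorem nonarch_folner_eventually_equal
    {K : Type*} [NontriviallyNormedField K] [LocallyCompactSpace K]
    (hna : IsNonarchimedean (norm : K → ℝ)) {n : ℕ}
    (r : ℕ → ℝ) (hr : Tendsto r atTop atTop)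
    (F : ℕ → Set ((Fin n → K) × (Fin n → K) × K))
    (hF : ∀ m, F m = {p | ‖p.1‖ ≤ r m ∧ ‖p.2.1‖ ≤ r m ∧ ‖p.2.2‖ ≤ (r m) ^ 2})
    (C : Set ((Fin n → K) × (Fin n → K) × K)) (hC : IsCompact C) :
    ∃ M : ℕ, ∀ m ≥ M, ∀ g₁ ∈ C, ∀ g₂ ∈ C,
      (fun p => heisMul (heisMul (heisInv g₂) p) g₁) '' F m = F m :=
  nonarch_folner_eventually_equal_general hna r hr F hF C hC
end
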